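/- Let $y^0$ be a global minimizer of $f(x) = -\frac{1}{6}\mathcal{A}x^3$ over $S = \{x \geq 0,\ e^T \bar x_i = 1\ \forall i\}$, where $\mathcal{A}$ is nonnegative, symmetric, and its nonzero entries involve three distinct blocks. Fix a block $i$ and an index $p_0$ with $(\bar y^0_i)_{p_0} > 0$. Define $y^1$ by replacing block $i$ of $y^0$ with the standard basis vector $e_{p_0} \in \mathbb{R}^{n_2}$ and keeping all other blocks. Then $f(y^1) = f(y^0)$, so $y^1$ is also a global minimizer, and $\|y^1\|_0 \leq \|y^0\|_0$ with strict inequality if block $i$ of $y^0$ had more than one nonzero entry. -/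

import Mathlib

/-!
Write `y⁽ᵖ⁾` for `y⁰` with block `i` replaced by `e_p`. Since every monomial of `𝒜` meets
block `i` at most once, `f` is affine in that block, so `f y⁰ = ∑ₚ y⁰ᵢₚ f y⁽ᵖ⁾` is a convex
combination of values that are all `≥ f y⁰` by minimality; hence `f y⁽ᵖ⁾ = f y⁰` whenever
`y⁰ᵢₚ > 0`. Only block `i` changes support, and it shrinks to the single index `p₀`.
-/

open Finset

theorem sum_mul_mul_mul_of_perturbation {P : Type*} (s : Finset P) {w : P → ℝ}
    (hw : ∑ p ∈ s, w p = 1) {r t u : ℝ} {dr dt du : P → ℝ}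
    (hr : ∑ p ∈ s, w p * dr p = 0) (ht : ∑ p ∈ s, w p * dt p = 0)
    (hu : ∑ p ∈ s, w p * du p = 0) (hrt : ∀ p, dr p * dt p = 0)
    (hru : ∀ p, dr p * du p = 0) (htu : ∀ p, dt p * du p = 0) :
    ∑ p ∈ s, w p * ((r + dr p) * (t + dt p) * (u + du p)) = r * t * u := by
  have expand : ∀ p, w p * ((r + dr p) * (t + dt p) * (u + du p)) =
      w p * (r * t * u) + w p * dr p * (t * u) + w p * dt p * (r * u) + w p * du p * (r * t) := by
    intro p
    linear_combination w p * ((u + du p) * hrt p + t * hru p + r * htu p)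
  simp only [expand, sum_add_distrib, ← sum_mul, hw, hr, ht, hu]
  ring

section BlockVertex

variable {ι κ : Type*}

def cubicForm [Fintype ι] [Fintype κ] (A : ι × κ → ι × κ → ι × κ → ℝ) (x : ι → κ → ℝ) : ℝ :=
  ∑ a, ∑ b, ∑ c, A a b c * x a.1 a.2 * x b.1 b.2 * x c.1 c.2

theorem sum_mul_update_single_sub_eq_zero [Fintype κ] [DecidableEq ι] [DecidableEq κ]
    (x : ι → κ → ℝ) (i : ι) (hx : ∑ p, x i p = 1) (j : ι × κ) :
    ∑ p, x i p * (Function.update x i (Pi.single p 1) j.1 j.2 - x j.1 j.2) = 0 := by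
  by_cases hj : j.1 = i
  · rcases j with ⟨j, q⟩
    dsimp only at hj
    subst hj
    simp [mul_sub, Pi.single_apply, ← sum_mul, hx]
  · simp [Function.update_of_ne hj]

theorem sum_mul_monomial_update_single [Fintype κ] [DecidableEq ι] [DecidableEq κ]
    (x : ι → κ → ℝ) (i : ι) (hx : ∑ p, x i p = 1)
    {a b c : ι × κ} (hab : a.1 ≠ b.1) (hac : a.1 ≠ c.1) (hbc : b.1 ≠ c.1) :
    ∑ p, x i p * (Function.update x i (Pi.single p 1) a.1 a.2 *
      Function.update x i (Pi.single p 1) b.1 b.2 * Function.update x i (Pi.single p 1) c.1 c.2) =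
      x a.1 a.2 * x b.1 b.2 * x c.1 c.2 := by
  set d : κ → ι × κ → ℝ := fun p j => Function.update x i (Pi.single p 1) j.1 j.2 - x j.1 j.2
  have hd : ∀ j, ∑ p, x i p * d p j = 0 := sum_mul_update_single_sub_eq_zero x i hx
  have hd_mul : ∀ {j k : ι × κ}, j.1 ≠ k.1 → ∀ p, d p j * d p k = 0 := by
    intro j k hjk p
    by_cases hj : j.1 = i
    · simp [d, Function.update_of_ne (hj ▸ hjk.symm)]
    · simp [d, Function.update_of_ne hj]
  have hupd : ∀ p j, Function.update x i (Pi.single p 1) j.1 j.2 = x j.1 j.2 + d p j := by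
    intro p j; simp [d]
  simp only [hupd]
  exact sum_mul_mul_mul_of_perturbation _ hx (hd a) (hd b) (hd c) (hd_mul hab) (hd_mul hac)
    (hd_mul hbc)

theorem sum_mul_cubicForm_update_single [Fintype ι] [Fintype κ] [DecidableEq ι] [DecidableEq κ]
    {A : ι × κ → ι × κ → ι × κ → ℝ}
    (hA : ∀ a b c, A a b c ≠ 0 → a.1 ≠ b.1 ∧ a.1 ≠ c.1 ∧ b.1 ≠ c.1)
    (x : ι → κ → ℝ) (i : ι) (hx : ∑ p, x i p = 1) :
    ∑ p, x i p * cubicForm A (Function.update x i (Pi.single p 1)) = cubicForm A x := by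
  simp only [cubicForm, mul_sum]
  rw [sum_comm]
  refine sum_congr rfl fun a _ => ?_
  rw [sum_comm]
  refine sum_congr rfl fun b _ => ?_
  rw [sum_comm]
  refine sum_congr rfl fun c _ => ?_
  by_cases h : A a b c = 0
  · simp [h]
  obtain ⟨hab, hac, hbc⟩ := hA a b c h
  calc _ = A a b c * ∑ p, x i p * (Function.update x i (Pi.single p 1) a.1 a.2 *
        Function.update x i (Pi.single p 1) b.1 b.2 *
        Function.update x i (Pi.single p 1) c.1 c.2) := by
        rw [mul_sum]; exact sum_congr rfl fun p _ => by ring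
    _ = _ := by rw [sum_mul_monomial_update_single x i hx hab hac hbc]; ring

theorem card_support_eq_sum_card_support [Fintype ι] [Fintype κ] (y : ι → κ → ℝ) :
    #{j : ι × κ | y j.1 j.2 ≠ 0} = ∑ i, #{q | y i q ≠ 0} := by
  rw [card_filter, Fintype.sum_prod_type]
  simp only [card_filter]

theorem card_support_update_add [Fintype ι] [Fintype κ] [DecidableEq ι]
    (y : ι → κ → ℝ) (i : ι) (v : κ → ℝ) :
    #{j : ι × κ | Function.update y i v j.1 j.2 ≠ 0} + #{q | y i q ≠ 0} =
      #{j : ι × κ | y j.1 j.2 ≠ 0} + #{q | v q ≠ 0} := by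
  simp only [card_support_eq_sum_card_support, ← add_sum_erase univ _ (mem_univ i),
    Function.update_self]
  have hother : ∀ j ∈ univ.erase i, #{q | Function.update y i v j q ≠ 0} = #{q | y j q ≠ 0} :=
    fun j hj => by rw [Function.update_of_ne (ne_of_mem_erase hj)]
  rw [sum_congr rfl hother]
  ring

end BlockVertex

theorem eq_of_sum_mul_eq_of_le {P : Type*} [Fintype P] {w g : P → ℝ} {m : ℝ}
    (hw : ∀ p, 0 ≤ w p) (hw1 : ∑ p, w p = 1) (hg : ∀ p, m ≤ g p) (hsum : ∑ p, w p * g p = m)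
    {p₀ : P} (hp₀ : 0 < w p₀) : g p₀ = m := by
  have hzero : ∑ p, w p * (g p - m) = 0 := by
    simp only [mul_sub, sum_sub_distrib, ← sum_mul, hsum, hw1, one_mul, sub_self]
  have := (sum_eq_zero_iff_of_nonneg fun p _ => mul_nonneg (hw p) (sub_nonneg.2 (hg p))).1
    hzero p₀ (mem_univ _)
  linarith [(mul_eq_zero.1 this).resolve_left hp₀.ne']

theorem stmt_8_general (n1 n2 : ℕ)
    (A : (Fin n1 × Fin n2) → (Fin n1 × Fin n2) → (Fin n1 × Fin n2) → ℝ)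
    (hblk : ∀ a b c, A a b c ≠ 0 → a.1 ≠ b.1 ∧ a.1 ≠ c.1 ∧ b.1 ≠ c.1)
    (f : (Fin n1 → Fin n2 → ℝ) → ℝ)
    (hf : ∀ x, f x = -(1/6) * ∑ a : Fin n1 × Fin n2, ∑ b : Fin n1 × Fin n2,
      ∑ c : Fin n1 × Fin n2, A a b c * x a.1 a.2 * x b.1 b.2 * x c.1 c.2)
    (y0 : Fin n1 → Fin n2 → ℝ)
    (h0nn : ∀ i p, 0 ≤ y0 i p) (h0sum : ∀ i, ∑ p, y0 i p = 1)
    (h0min : ∀ y : Fin n1 → Fin n2 → ℝ,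
      (∀ i p, 0 ≤ y i p) → (∀ i, ∑ p, y i p = 1) → f y0 ≤ f y)
    (i : Fin n1) (p0 : Fin n2) (hp0 : 0 < y0 i p0)
    (y1 : Fin n1 → Fin n2 → ℝ)
    (hy1 : ∀ i' p, y1 i' p =
      if i' = i then (if p = p0 then (1:ℝ) else 0) else y0 i' p) :
    f y1 = f y0 ∧
    (∀ y : Fin n1 → Fin n2 → ℝ,
      (∀ i p, 0 ≤ y i p) → (∀ i, ∑ p, y i p = 1) → f y1 ≤ f y) ∧
    (Finset.univ.filter fun ip : Fin n1 × Fin n2 => y1 ip.1 ip.2 ≠ 0).card ≤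
      (Finset.univ.filter fun ip : Fin n1 × Fin n2 => y0 ip.1 ip.2 ≠ 0).card ∧
    (1 < (Finset.univ.filter fun q : Fin n2 => y0 i q ≠ 0).card →
      (Finset.univ.filter fun ip : Fin n1 × Fin n2 => y1 ip.1 ip.2 ≠ 0).card <
        (Finset.univ.filter fun ip : Fin n1 × Fin n2 => y0 ip.1 ip.2 ≠ 0).card) := by
  obtain rfl : y1 = Function.update y0 i (Pi.single p0 1) := by
    funext j q
    by_cases hj : j = i <;> simp [hy1, hj, Pi.single_apply]
  have hf_cubic : ∀ x, f x = -(1/6) * cubicForm A x := hf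
  have hvertex_min : ∀ p, f y0 ≤ f (Function.update y0 i (Pi.single p 1)) := by
    refine fun p => h0min _ (fun j q => ?_) (fun j => ?_) <;> by_cases hj : j = i
    · subst hj; simp [Pi.single_apply, apply_ite]
    · simp [Function.update_of_ne hj, h0nn]
    · simp [hj]
    · simp [Function.update_of_ne hj, h0sum]
  have hvalue := eq_of_sum_mul_eq_of_le (h0nn i) (h0sum i) hvertex_min
    (by simp only [hf_cubic, mul_left_comm (y0 i _), ← mul_sum,
      sum_mul_cubicForm_update_single hblk y0 i (h0sum i)]) hp0
  have hcard := card_support_update_add y0 i (Pi.single p0 (1 : ℝ))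
  have hsingle : #{q | (Pi.single p0 1 : Fin n2 → ℝ) q ≠ 0} = 1 :=
    card_eq_one.2 ⟨p0, by ext q; by_cases hq : q = p0 <;> simp [hq]⟩
  have hblock_pos : 0 < #{q | y0 i q ≠ 0} := card_pos.2 ⟨p0, by simp [hp0.ne']⟩
  rw [hsingle] at hcard
  refine ⟨hvalue, fun y hy hys => hvalue ▸ h0min y hy hys, ?_, ?_⟩
  · omega
  · omega

/-- replacing one block of a global minimizer of the relaxation by a vertex
of the simplex supported in that block's support keeps the objective value, hence yields
another global minimizer with no larger (possibly strictly smaller) support. -/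
theorem stmt_8 (n1 n2 : ℕ)
    (A : (Fin n1 × Fin n2) → (Fin n1 × Fin n2) → (Fin n1 × Fin n2) → ℝ)
    (hA0 : ∀ a b c, 0 ≤ A a b c)
    (hsym : ∀ a b c, A a b c = A b a c ∧ A a b c = A a c b)
    (hblk : ∀ a b c, A a b c ≠ 0 → a.1 ≠ b.1 ∧ a.1 ≠ c.1 ∧ b.1 ≠ c.1)
    (f : (Fin n1 → Fin n2 → ℝ) → ℝ)
    (hf : ∀ x, f x = -(1/6) * ∑ a : Fin n1 × Fin n2, ∑ b : Fin n1 × Fin n2,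
      ∑ c : Fin n1 × Fin n2, A a b c * x a.1 a.2 * x b.1 b.2 * x c.1 c.2)
    (y0 : Fin n1 → Fin n2 → ℝ)
    (h0nn : ∀ i p, 0 ≤ y0 i p) (h0sum : ∀ i, ∑ p, y0 i p = 1)
    (h0min : ∀ y : Fin n1 → Fin n2 → ℝ,
      (∀ i p, 0 ≤ y i p) → (∀ i, ∑ p, y i p = 1) → f y0 ≤ f y)
    (i : Fin n1) (p0 : Fin n2) (hp0 : 0 < y0 i p0)
    (y1 : Fin n1 → Fin n2 → ℝ)
    (hy1 : ∀ i' p, y1 i' p =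
      if i' = i then (if p = p0 then (1:ℝ) else 0) else y0 i' p) :
    f y1 = f y0 ∧
    (∀ y : Fin n1 → Fin n2 → ℝ,
      (∀ i p, 0 ≤ y i p) → (∀ i, ∑ p, y i p = 1) → f y1 ≤ f y) ∧
    (Finset.univ.filter fun ip : Fin n1 × Fin n2 => y1 ip.1 ip.2 ≠ 0).card ≤
      (Finset.univ.filter fun ip : Fin n1 × Fin n2 => y0 ip.1 ip.2 ≠ 0).card ∧
    (1 < (Finset.univ.filter fun q : Fin n2 => y0 i q ≠ 0).card →
      (Finset.univ.filter fun ip : Fin n1 × Fin n2 => y1 ip.1 ip.2 ≠ 0).card <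
        (Finset.univ.filter fun ip : Fin n1 × Fin n2 => y0 ip.1 ip.2 ≠ 0).card) :=
  stmt_8_general n1 n2 A hblk f hf y0 h0nn h0sum h0min i p0 hp0 y1 hy1
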